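/- arXiv:1812.02166 — 2 statements merged into one kernel-verified Lean document; each statement's English description precedes it below -/
import Mathlib

section
/- Let f be the associated function of an equitable 2-partition of Q_{12} with quotient matrix [[3,9],[7,5]]. Then every 5-dimensional face of Q_{12} contains exactly 18 vertices of C_1 and 14 vertices of C_0; equivalently the sum of values of f over any 5-face is 0. -/
attribute [local instance] Classical.propDecidable
noncomputable section

/-- Vertices of the `n`-cube: binary words of length `n` over GF(2). -/
abbrev Vtx (n : ℕ) := Fin n → ZMod 2

/-- The (Hamming) weight of a word: the number of ones. -/
def wt {n : ℕ} (x : Vtx n) : ℕ := (Finset.univ.filter (fun i => x i = 1)).card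

/-- The inner product `x₁y₁ + ⋯ + xₙyₙ` computed as a natural number. -/
def ip {n : ℕ} (x y : Vtx n) : ℕ := ∑ i, (x i).val * (y i).val

/-- The character `χ_y(x) = (−1)^⟨x,y⟩`. -/
def chi {n : ℕ} (y x : Vtx n) : ℚ := (-1) ^ ip x y

/-- `leq z x` means `z ≼ x`, i.e. `zᵢ ≤ xᵢ` for all `i`. -/
def leq {n : ℕ} (x y : Vtx n) : Prop := ∀ i, (x i).val ≤ (y i).val

/-- The Fourier coefficient `f̂(y) = 2^{−n} Σ_z f(z)(−1)^⟨z,y⟩`. -/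
def hat {n : ℕ} (f : Vtx n → ℚ) (y : Vtx n) : ℚ :=
  (∑ z, f z * (-1 : ℚ) ^ ip z y) / 2 ^ n

/-- Adjacency in the `n`-cube: the words differ in exactly one coordinate. -/
def adj {n : ℕ} (x y : Vtx n) : Prop :=
  (Finset.univ.filter (fun i => x i ≠ y i)).card = 1

/-- `(C0, complement of C0)` is an equitable partition with quotient matrix
`[[a,b],[c,d]]`. -/
def IsEqPartition {n : ℕ} (C0 : Finset (Vtx n)) (a b c d : ℕ) : Prop :=
  (∀ x ∈ C0, (Finset.univ.filter (fun y => adj x y ∧ y ∈ C0)).card = a ∧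
             (Finset.univ.filter (fun y => adj x y ∧ y ∉ C0)).card = b) ∧
  (∀ x ∉ C0, (Finset.univ.filter (fun y => adj x y ∧ y ∈ C0)).card = c ∧
             (Finset.univ.filter (fun y => adj x y ∧ y ∉ C0)).card = d)

/-- The associated function of an equitable partition: `b` on `C0`, `−c` outside. -/
def assoc {n : ℕ} (C0 : Finset (Vtx n)) (b c : ℕ) : Vtx n → ℚ :=
  fun x => if x ∈ C0 then (b : ℚ) else -(c : ℚ)

/-- The face `Γ_u^v = {z + v : z ≼ u}` (of dimension `wt u`). -/
def face {n : ℕ} (u v : Vtx n) : Finset (Vtx n) :=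
  Finset.univ.filter (fun x => ∃ z, leq z u ∧ x = z + v)

lemma zmod2_cases : ∀ a : ZMod 2, a = 0 ∨ a = 1 := by decide
lemma zmod2_ne : ∀ a b : ZMod 2, a ≠ b → b = a + 1 := by decide
lemma zmod2_add_ne : ∀ a b : ZMod 2, b ≠ 0 → a ≠ a + b := by decide
lemma zmod2_val_le_one : ∀ a : ZMod 2, a.val ≤ 1 := by decide

def ee {n : ℕ} (i : Fin n) : Vtx n := fun j => if j = i then 1 else 0

lemma adj_add_ee {n : ℕ} (x : Vtx n) (i : Fin n) : adj x (x + ee i) := by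
  unfold adj
  have : (Finset.univ.filter (fun j => x j ≠ (x + ee i) j)) = {i} := by
    ext j
    simp only [Finset.mem_filter, Finset.mem_univ, true_and, Finset.mem_singleton]
    constructor
    · intro hj
      by_contra hji
      apply hj
      show x j = x j + ee i j
      simp [ee, hji]
    · intro hj
      subst hj
      apply zmod2_add_ne
      show ee j j ≠ 0
      simp [ee]
  rw [this]; simp

lemma ee_inj {n : ℕ} (x : Vtx n) : ∀ i j : Fin n, x + ee i = x + ee j → i = j := by
  intro i j hij
  have := congrFun hij i
  simp only [Pi.add_apply] at this
  have h2 : ee i i = ee j i := by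
    have := add_left_cancel this
    exact this
  by_contra hne
  simp only [ee, if_pos rfl, if_true, if_neg hne] at h2
  exact one_ne_zero h2

lemma adj_eq_image {n : ℕ} (x : Vtx n) :
    Finset.univ.filter (fun y => adj x y) = Finset.univ.image (fun i => x + ee i) := by
  ext y
  simp only [Finset.mem_filter, Finset.mem_univ, true_and, Finset.mem_image]
  constructor
  · intro hy
    obtain ⟨i, hi⟩ := Finset.card_eq_one.mp hy
    refine ⟨i, ?_⟩
    funext j
    by_cases hj : j = i
    · subst hj
      have hji : j ∈ Finset.univ.filter (fun k => x k ≠ y k) := by rw [hi]; simp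
      simp only [Finset.mem_filter] at hji
      have := zmod2_ne _ _ hji.2
      simp [ee, this]
    · have hji : j ∉ Finset.univ.filter (fun k => x k ≠ y k) := by rw [hi]; simp [hj]
      simp only [Finset.mem_filter, Finset.mem_univ, true_and, not_not] at hji
      simp [ee, hj, ← hji]
  · rintro ⟨i, rfl⟩
    exact adj_add_ee x i

lemma sum_adj {n : ℕ} (f : Vtx n → ℚ) (x : Vtx n) :
    ∑ y ∈ Finset.univ.filter (fun y => adj x y), f y = ∑ i, f (x + ee i) := by
  rw [adj_eq_image, Finset.sum_image]
  intro i _ j _ hij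
  exact ee_inj x i j hij

lemma sum_assoc_split {n : ℕ} (C0 : Finset (Vtx n)) (s : Finset (Vtx n)) :
    ∑ y ∈ s, assoc C0 9 7 y
      = 9 * ((s.filter (fun y => y ∈ C0)).card : ℚ)
        - 7 * ((s.filter (fun y => y ∉ C0)).card : ℚ) := by
  unfold assoc
  rw [Finset.sum_ite, Finset.sum_const, Finset.sum_const]
  simp [nsmul_eq_mul]
  ring

lemma eigen {C0 : Finset (Vtx 12)} (h : IsEqPartition C0 3 9 7 5) (x : Vtx 12) :
    ∑ i, assoc C0 9 7 (x + ee i) = -4 * assoc C0 9 7 x := by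
  rw [← sum_adj]
  rw [sum_assoc_split C0]
  rw [Finset.filter_filter, Finset.filter_filter]
  by_cases hx : x ∈ C0
  · obtain ⟨h3, h9⟩ := h.1 x hx
    rw [h3, h9, assoc, if_pos hx]
    norm_num
  · obtain ⟨h7, h5⟩ := h.2 x hx
    rw [h7, h5, assoc, if_neg hx]
    norm_num

def S (f : Vtx 12 → ℚ) (u v : Vtx 12) : ℚ :=
  ∑ z ∈ Finset.univ.filter (fun z => leq z u), f (z + v)

lemma Zu_image (u : Vtx 12) (i : Fin 12) (hi : u i = 1) :
    (Finset.univ.filter (fun z => leq z u)).image (· + ee i)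
      = Finset.univ.filter (fun z => leq z u) := by
  apply Finset.eq_of_subset_of_card_le
  · intro x hx
    simp only [Finset.mem_image, Finset.mem_filter, Finset.mem_univ, true_and] at hx ⊢
    obtain ⟨z, hz, rfl⟩ := hx
    intro j
    by_cases hj : j = i
    · subst hj
      rw [hi]
      exact le_trans (zmod2_val_le_one _) (by decide)
    · have : (z + ee i) j = z j := by
        show z j + ee i j = z j
        simp [ee, hj]
      rw [this]
      exact hz j
  · rw [Finset.card_image_of_injective _ (add_left_injective (ee i))]

lemma S_shift (f : Vtx 12 → ℚ) (u v : Vtx 12) (i : Fin 12) (hi : u i = 1) :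
    S f u (v + ee i) = S f u v := by
  unfold S
  conv_rhs => rw [← Zu_image u i hi,
    Finset.sum_image (fun a _ b _ hab => add_left_injective (ee i) hab)]
  apply Finset.sum_congr rfl
  intro z _
  show f (z + (v + ee i)) = f (z + ee i + v)
  congr 1
  abel

lemma S_eigen {C0 : Finset (Vtx 12)} (h : IsEqPartition C0 3 9 7 5) (u v : Vtx 12) :
    ∑ i, S (assoc C0 9 7) u (v + ee i) = -4 * S (assoc C0 9 7) u v := by
  unfold S
  rw [Finset.sum_comm, Finset.mul_sum]
  apply Finset.sum_congr rfl
  intro z _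
  rw [← eigen h (z + v)]
  apply Finset.sum_congr rfl
  intro i _
  congr 1
  abel

lemma S_zero {C0 : Finset (Vtx 12)} (h : IsEqPartition C0 3 9 7 5) (u : Vtx 12)
    (hu : wt u = 5) (v : Vtx 12) : S (assoc C0 9 7) u v = 0 := by
  set f := assoc C0 9 7 with hf
  have key : ∀ w, ∑ i ∈ Finset.univ.filter (fun i => ¬ u i = 1), S f u (w + ee i)
      = -9 * S f u w := by
    intro w
    have h1 := S_eigen h u w
    rw [← Finset.sum_filter_add_sum_filter_not Finset.univ (fun i => u i = 1)] at h1
    have h2 : ∑ i ∈ Finset.univ.filter (fun i => u i = 1), S f u (w + ee i)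
        = 5 * S f u w := by
      rw [Finset.sum_congr rfl (fun i hi => S_shift f u w i (Finset.mem_filter.mp hi).2)]
      rw [Finset.sum_const, nsmul_eq_mul]
      have : (Finset.univ.filter (fun i => u i = 1)).card = 5 := hu
      rw [this]
      norm_num
    rw [h2] at h1
    linarith
  have hcard7 : (Finset.univ.filter (fun i : Fin 12 => ¬ u i = 1)).card = 7 := by
    have h12 := Finset.card_filter_add_card_filter_not
      (s := (Finset.univ : Finset (Fin 12))) (p := fun i => u i = 1)
    have h5 : (Finset.univ.filter (fun i : Fin 12 => u i = 1)).card = 5 := hu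
    simp only [Finset.card_univ, Fintype.card_fin] at h12
    omega
  obtain ⟨v0, _, hmax⟩ := Finset.exists_max_image Finset.univ (fun w => |S f u w|)
    ⟨0, Finset.mem_univ 0⟩
  have hm : 9 * |S f u v0| ≤ 7 * |S f u v0| := by
    have heq : 9 * |S f u v0| = |∑ i ∈ Finset.univ.filter (fun i => ¬ u i = 1),
        S f u (v0 + ee i)| := by
      rw [key v0, abs_mul]
      norm_num
    rw [heq]
    calc |∑ i ∈ Finset.univ.filter (fun i => ¬ u i = 1), S f u (v0 + ee i)|
        ≤ ∑ i ∈ Finset.univ.filter (fun i => ¬ u i = 1), |S f u (v0 + ee i)| :=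
          Finset.abs_sum_le_sum_abs _ _
      _ ≤ ∑ _i ∈ Finset.univ.filter (fun i => ¬ u i = 1), |S f u v0| :=
          Finset.sum_le_sum (fun i _ => hmax _ (Finset.mem_univ _))
      _ = 7 * |S f u v0| := by rw [Finset.sum_const, hcard7, nsmul_eq_mul]; norm_num
  have h0 : |S f u v0| = 0 := by
    have := abs_nonneg (S f u v0)
    linarith
  have := hmax v (Finset.mem_univ v)
  rw [h0] at this
  exact abs_nonpos_iff.mp this

lemma card_leq {n : ℕ} (u : Vtx n) :
    (Finset.univ.filter (fun z => leq z u)).card = 2 ^ wt u := by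
  rw [← Fintype.card_subtype]
  have e0 : {z : Vtx n // leq z u} ≃ {z : Vtx n // ∀ i, (z i).val ≤ (u i).val} :=
    Equiv.subtypeEquivRight (fun z => Iff.rfl)
  have e1 : {z : Vtx n // leq z u} ≃ ∀ i, {a : ZMod 2 // a.val ≤ (u i).val} :=
    e0.trans (@Equiv.subtypePiEquivPi (Fin n) (fun _ => ZMod 2) (fun i a => a.val ≤ (u i).val))
  rw [Fintype.card_congr e1, Fintype.card_pi]
  have hfac : ∀ i, Fintype.card {a : ZMod 2 // a.val ≤ (u i).val}
      = if u i = 1 then 2 else 1 := by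
    intro i
    rcases zmod2_cases (u i) with hh | hh <;> rw [hh]
    · rw [if_neg (by decide)]
      apply Fintype.card_eq_one_iff.mpr
      refine ⟨⟨0, by decide⟩, fun b => Subtype.ext ?_⟩
      have hb : (b : ZMod 2).val = 0 := Nat.le_zero.mp (le_trans b.2 (by decide))
      have : (b : ZMod 2) = 0 := (ZMod.val_eq_zero _).mp hb
      rw [this]
    · rw [if_pos rfl]
      rw [Fintype.card_congr (Equiv.subtypeUnivEquiv
        (fun a => le_trans (zmod2_val_le_one a) (by decide)))]
      exact ZMod.card 2
  rw [Finset.prod_congr rfl (fun i _ => hfac i), Finset.prod_ite,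
    Finset.prod_const, Finset.prod_const, one_pow, mul_one]
  rfl

lemma face_eq_image {n : ℕ} (u v : Vtx n) :
    face u v = (Finset.univ.filter (fun z => leq z u)).image (· + v) := by
  ext x
  simp only [face, Finset.mem_filter, Finset.mem_univ, true_and, Finset.mem_image]
  constructor
  · rintro ⟨z, hz, rfl⟩; exact ⟨z, hz, rfl⟩
  · rintro ⟨z, hz, rfl⟩; exact ⟨z, hz, rfl⟩

lemma card_face (u v : Vtx 12) (hu : wt u = 5) : (face u v).card = 32 := by
  rw [face_eq_image, Finset.card_image_of_injective _ (add_left_injective v),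
    card_leq, hu]
  norm_num

lemma sum_face {C0 : Finset (Vtx 12)} (h : IsEqPartition C0 3 9 7 5)
    (u v : Vtx 12) (hu : wt u = 5) :
    ∑ x ∈ face u v, assoc C0 9 7 x = 0 := by
  rw [face_eq_image,
    Finset.sum_image (fun a _ b _ hab => add_left_injective v hab)]
  exact S_zero h u hu v

theorem stmt11 (C0 : Finset (Vtx 12)) (h : IsEqPartition C0 3 9 7 5)
    (u v : Vtx 12) (hu : wt u = 5) :
    ((face u v).filter (fun x => x ∈ C0)).card = 14 ∧
    ((face u v).filter (fun x => x ∉ C0)).card = 18 ∧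
    ∑ x ∈ face u v, assoc C0 9 7 x = 0 := by
  have hsum := sum_face h u v hu
  have hsplit := sum_assoc_split C0 (face u v)
  rw [hsum] at hsplit
  set a := ((face u v).filter (fun x => x ∈ C0)).card with ha
  set b := ((face u v).filter (fun x => x ∉ C0)).card with hb
  have hab : a + b = 32 := by
    rw [ha, hb]
    rw [Finset.card_filter_add_card_filter_not]
    exact card_face u v hu
  have h97 : (9 : ℚ) * a = 7 * b := by linarith
  have h97n : 9 * a = 7 * b := by exact_mod_cast h97
  refine ⟨by omega, by omega, hsum⟩
end
end

section
/- Let f be the associated function of an equitable 2-partition of Q_{12} with quotient matrix [[3,9],[7,5]]. Then for every x of weight 8, f̂(x) is an integer in {−7,−6,…,9}, and for every x of weight 9 the sum Σ_{z ≼ x} f̂(z) is an odd integer. -/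
attribute [local instance] Classical.propDecidable
noncomputable section

/-! The associated function `f` of an equitable partition with quotient matrix `[[a,b],[c,d]]` is
an eigenfunction of the cube with eigenvalue `a - c = -4`, while the character `χ_x` has
eigenvalue `12 - 2 wt x`; so `f̂` is supported on words of weight 8. By orthogonality of
characters, `2^{12 - wt x} Σ_{z ≼ x} f̂(z)` is the sum of `f` over the face `{w ≼ x + 1̄}`,
namely `16 k - 7 · 2^{12 - wt x}` where `k` counts the vertices of the face in `C0`.
For `wt x = 8` only `f̂(x)` survives on the left, so `f̂(x) = k - 7` with `0 ≤ k ≤ 16`;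
for `wt x = 9` the sum is `2 k - 7`. -/

open Finset

section Cube

variable {n : ℕ}

lemma zmod_two_eq_zero_or_one (a : ZMod 2) : a = 0 ∨ a = 1 := by
  revert a
  decide

lemma neg_one_pow_ip_eq_prod (w x : Vtx n) :
    (-1 : ℚ) ^ ip w x = ∏ i, (-1 : ℚ) ^ ((w i).val * (x i).val) := by
  rw [ip, prod_pow_eq_pow_sum]

lemma neg_one_pow_ip_add_left (u v x : Vtx n) :
    (-1 : ℚ) ^ ip (u + v) x = (-1) ^ ip u x * (-1) ^ ip v x := by
  simp only [neg_one_pow_ip_eq_prod, ← prod_mul_distrib, Pi.add_apply, ← pow_add]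
  refine prod_congr rfl fun i _ => ?_
  rw [neg_one_pow_eq_pow_mod_two, neg_one_pow_eq_pow_mod_two (n := _ + _)]
  generalize u i = a, v i = b, x i = c
  revert a b c
  decide

lemma neg_one_pow_ip_single_left (i : Fin n) (x : Vtx n) :
    (-1 : ℚ) ^ ip (Pi.single i 1) x = (-1) ^ (x i).val := by
  rw [ip, sum_eq_single i (fun j _ hj => by simp [Pi.single_eq_of_ne hj]) (by simp)]
  simp [ZMod.val_one]

lemma neg_one_pow_val (a : ZMod 2) : (-1 : ℚ) ^ a.val = 1 - 2 * if a = 1 then 1 else 0 := by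
  rcases zmod_two_eq_zero_or_one a with rfl | rfl <;> norm_num [ZMod.val_one]

lemma sum_neg_one_pow_val (x : Vtx n) : ∑ i, (-1 : ℚ) ^ (x i).val = n - 2 * wt x := by
  simp only [neg_one_pow_val, sum_sub_distrib, ← mul_sum, sum_boole, wt]
  simp

lemma sum_neg_one_pow_ip_add_single (z x : Vtx n) :
    ∑ i, (-1 : ℚ) ^ ip (z + Pi.single i 1) x = ((n : ℚ) - 2 * wt x) * (-1) ^ ip z x := by
  simp only [neg_one_pow_ip_add_left, neg_one_pow_ip_single_left, ← mul_sum,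
    sum_neg_one_pow_val]
  ring

lemma add_add_self_right (z v : Vtx n) : z + v + v = z := by
  funext i
  simp only [Pi.add_apply, add_assoc, CharTwo.add_self_eq_zero, add_zero]

lemma adj_iff_exists_single {z y : Vtx n} : adj z y ↔ ∃ i, y = z + Pi.single i 1 := by
  rw [adj, card_eq_one]
  refine exists_congr fun i => ?_
  simp only [Finset.ext_iff, mem_filter, mem_univ, true_and, mem_singleton, funext_iff,
    Pi.add_apply, Pi.single_apply]
  refine forall_congr' fun j => ?_
  by_cases hji : j = i
  · simp only [hji, if_true, iff_true]
    generalize z i = a, y i = b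
    revert a b
    decide
  · simp only [hji, if_false, iff_false, not_not, add_zero]
    exact eq_comm

lemma sum_adj_eq_sum_add_single {M : Type*} [AddCommMonoid M] (g : Vtx n → M) (z : Vtx n) :
    ∑ y ∈ univ.filter (adj z ·), g y = ∑ i, g (z + Pi.single i 1) := by
  have hnbhd : univ.filter (adj z ·) = univ.image fun i => z + Pi.single i 1 := by
    ext y
    simp [adj_iff_exists_single, eq_comm]
  rw [hnbhd, sum_image fun i _ j _ hij => by simpa [Pi.single_apply] using congrFun hij i]

lemma sum_assoc_eq_card (C0 s : Finset (Vtx n)) (b c : ℕ) :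
    ∑ w ∈ s, assoc C0 b c w = ((b : ℚ) + c) * #(s.filter (· ∈ C0)) - c * #s := by
  have hcard : (#(s.filter (· ∈ C0)) : ℚ) + #(s.filter (· ∉ C0)) = #s := by
    exact_mod_cast card_filter_add_card_filter_not _
  simp only [assoc, sum_ite, sum_const, nsmul_eq_mul]
  linear_combination -(c : ℚ) * hcard

lemma IsEqPartition.sum_adj_assoc {C0 : Finset (Vtx n)} {a b c d : ℕ}
    (h : IsEqPartition C0 a b c d) (hdeg : a + b = c + d) (z : Vtx n) :
    ∑ y ∈ univ.filter (adj z ·), assoc C0 b c y = ((a : ℚ) - c) * assoc C0 b c z := by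
  have hsplit : ∑ y ∈ univ.filter (adj z ·), assoc C0 b c y
      = (b : ℚ) * #(univ.filter fun y => adj z y ∧ y ∈ C0)
        - c * #(univ.filter fun y => adj z y ∧ y ∉ C0) := by
    simp only [assoc, sum_ite, sum_const, filter_filter, nsmul_eq_mul]
    ring
  have hdeg' : (a : ℚ) + b = c + d := by exact_mod_cast hdeg
  by_cases hz : z ∈ C0
  · rw [hsplit, (h.1 z hz).1, (h.1 z hz).2, assoc, if_pos hz]
    ring
  · rw [hsplit, (h.2 z hz).1, (h.2 z hz).2, assoc, if_neg hz]
    linear_combination (c : ℚ) * hdeg'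

lemma hat_eq_zero_of_sum_add_single {f : Vtx n → ℚ} {μ : ℚ}
    (hf : ∀ z, ∑ i, f (z + Pi.single i 1) = μ * f z) {x : Vtx n}
    (hx : (n : ℚ) - 2 * wt x ≠ μ) : hat f x = 0 := by
  set S := ∑ z, f z * (-1 : ℚ) ^ ip z x with hS_def
  have hS : μ * S = ((n : ℚ) - 2 * wt x) * S := calc
    μ * S = ∑ i, ∑ z, f (z + Pi.single i 1) * (-1 : ℚ) ^ ip z x := by
      simp only [S, mul_sum, ← mul_assoc, ← hf, sum_mul]
      exact sum_comm
    _ = ∑ i, ∑ z, f z * (-1 : ℚ) ^ ip (z + Pi.single i 1) x := by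
      refine sum_congr rfl fun i _ => ?_
      exact Fintype.sum_equiv (Equiv.addRight (Pi.single i 1)) _ _ fun z => by
        simp [add_add_self_right]
    _ = ∑ z, f z * ∑ i, (-1 : ℚ) ^ ip (z + Pi.single i 1) x := by
      rw [sum_comm]
      simp only [mul_sum]
    _ = ((n : ℚ) - 2 * wt x) * S := by
      simp only [sum_neg_one_pow_ip_add_single, S, mul_sum]
      exact sum_congr rfl fun z _ => by ring
  rw [hat, ← hS_def, (mul_eq_mul_right_iff.mp hS).resolve_left hx.symm, zero_div]

def below (x : Vtx n) : Finset (Vtx n) := univ.filter (leq · x)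

/-- The face `{w ≼ x + 1̄}` of words vanishing on the support of `x`. -/
def offSupport (x : Vtx n) : Finset (Vtx n) := univ.filter fun w => ∀ i, x i = 1 → w i = 0

lemma below_eq_piFinset (x : Vtx n) :
    below x = Fintype.piFinset fun i => if x i = 1 then univ else {0} := by
  ext z
  rw [below, mem_filter, Fintype.mem_piFinset]
  simp only [mem_univ, true_and, leq]
  refine forall_congr' fun i => ?_
  generalize z i = a, x i = b
  revert a b
  decide

lemma offSupport_eq_piFinset (x : Vtx n) :
    offSupport x = Fintype.piFinset fun i => if x i = 1 then {0} else univ := by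
  ext w
  simp only [offSupport, mem_filter, mem_univ, true_and, Fintype.mem_piFinset]
  refine forall_congr' fun i => ?_
  split_ifs <;> simp [*]

lemma card_offSupport (x : Vtx n) : #(offSupport x) = 2 ^ (n - wt x) := by
  have hcard := card_filter_add_card_filter_not (s := univ) (fun i => x i = 1)
  rw [card_univ, Fintype.card_fin] at hcard
  rw [offSupport_eq_piFinset, Fintype.card_piFinset]
  simp only [apply_ite card, card_singleton, card_univ, ZMod.card, prod_ite, prod_const]
  simp [wt, ← hcard]

lemma sum_neg_one_pow_val_mul (b : ZMod 2) :
    ∑ a : ZMod 2, (-1 : ℚ) ^ (b.val * a.val) = if b = 0 then 2 else 0 := by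
  rw [show (univ : Finset (ZMod 2)) = {0, 1} by decide, sum_pair zero_ne_one]
  rcases zmod_two_eq_zero_or_one b with rfl | rfl <;> norm_num [ZMod.val_one]

lemma sum_below_neg_one_pow_ip (x w : Vtx n) :
    ∑ z ∈ below x, (-1 : ℚ) ^ ip w z = if w ∈ offSupport x then 2 ^ wt x else 0 := by
  have hcoord : ∀ i, ∑ a ∈ (if x i = 1 then univ else {0} : Finset (ZMod 2)),
      (-1 : ℚ) ^ ((w i).val * a.val) = if x i = 1 then (if w i = 0 then 2 else 0) else 1 := by
    intro i
    split_ifs <;> simp_all [sum_neg_one_pow_val_mul]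
  simp only [below_eq_piFinset, neg_one_pow_ip_eq_prod]
  rw [← prod_univ_sum (fun i => if x i = 1 then univ else {0})
    (fun i (a : ZMod 2) => (-1 : ℚ) ^ ((w i).val * a.val))]
  simp only [hcoord, offSupport, mem_filter, mem_univ, true_and]
  split_ifs with hw
  · rw [prod_congr rfl fun i _ =>
      show _ = if x i = 1 then (2 : ℚ) else 1 by split_ifs <;> simp_all]
    rw [prod_ite, prod_const, prod_const, one_pow, mul_one, wt]
  · push Not at hw
    obtain ⟨i, hxi, hwi⟩ := hw
    exact prod_eq_zero (mem_univ i) (by simp [hxi, hwi])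

lemma sum_below_hat_mul (f : Vtx n → ℚ) (x : Vtx n) :
    (∑ z ∈ below x, hat f z) * 2 ^ n = 2 ^ wt x * ∑ w ∈ offSupport x, f w := calc
  (∑ z ∈ below x, hat f z) * 2 ^ n = ∑ w, f w * ∑ z ∈ below x, (-1 : ℚ) ^ ip w z := by
    simp only [hat, sum_mul, div_mul_cancel₀ _ (pow_ne_zero n two_ne_zero : (2 : ℚ) ^ n ≠ 0),
      mul_sum]
    exact sum_comm
  _ = 2 ^ wt x * ∑ w ∈ offSupport x, f w := by
    simp only [sum_below_neg_one_pow_ip, mul_ite, mul_zero, ← sum_filter, filter_univ_mem,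
      mul_sum]
    exact sum_congr rfl fun w _ => mul_comm _ _

lemma leq_iff_forall_eq_one {z x : Vtx n} : leq z x ↔ ∀ i, z i = 1 → x i = 1 := by
  refine forall_congr' fun i => ?_
  generalize z i = a, x i = b
  revert a b
  decide

lemma wt_lt_of_leq_of_ne {z x : Vtx n} (hzx : leq z x) (hne : z ≠ x) : wt z < wt x := by
  have hsub : univ.filter (z · = 1) ⊆ univ.filter (x · = 1) :=
    monotone_filter_right _ fun i _ => leq_iff_forall_eq_one.mp hzx i
  refine (card_le_card hsub).lt_of_ne fun hwt => hne (funext fun i => ?_)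
  have hiff := Finset.ext_iff.mp (eq_of_subset_of_card_le hsub hwt.ge) i
  simp only [mem_filter, mem_univ, true_and] at hiff
  rcases zmod_two_eq_zero_or_one (z i) with hz | hz <;>
    rcases zmod_two_eq_zero_or_one (x i) with hx | hx <;> simp_all

lemma exists_sum_below_hat_assoc (C0 : Finset (Vtx n)) (b c : ℕ) (x : Vtx n) :
    ∃ k : ℕ, k ≤ 2 ^ (n - wt x) ∧ (∑ z ∈ below x, hat (assoc C0 b c) z) * 2 ^ n
      = 2 ^ wt x * (((b : ℚ) + c) * k - c * 2 ^ (n - wt x)) := by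
  refine ⟨#((offSupport x).filter (· ∈ C0)),
    (card_filter_le _ _).trans_eq (card_offSupport x), ?_⟩
  rw [sum_below_hat_mul, sum_assoc_eq_card, card_offSupport]
  push_cast
  ring

end Cube

theorem stmt12 (C0 : Finset (Vtx 12)) (h : IsEqPartition C0 3 9 7 5) :
    (∀ x : Vtx 12, wt x = 8 →
      ∃ m : ℤ, hat (assoc C0 9 7) x = (m : ℚ) ∧ -7 ≤ m ∧ m ≤ 9) ∧
    (∀ x : Vtx 12, wt x = 9 →
      ∃ m : ℤ, Odd m ∧
        ∑ z ∈ Finset.univ.filter (fun z => leq z x), hat (assoc C0 9 7) z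
          = (m : ℚ)) := by
  have heigen (z : Vtx 12) : ∑ i, assoc C0 9 7 (z + Pi.single i 1) = -4 * assoc C0 9 7 z := by
    rw [← sum_adj_eq_sum_add_single, h.sum_adj_assoc rfl]
    norm_num
  have hvanish (z : Vtx 12) (hz : wt z ≠ 8) : hat (assoc C0 9 7) z = 0 := by
    refine hat_eq_zero_of_sum_add_single heigen fun h4 => hz ?_
    push_cast at h4
    exact_mod_cast (by linarith : (wt z : ℚ) = 8)
  refine ⟨fun x hx => ?_, fun x hx => ?_⟩
  · obtain ⟨k, hk, hsum⟩ := exists_sum_below_hat_assoc C0 9 7 x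
    have hsingle : ∑ z ∈ below x, hat (assoc C0 9 7) z = hat (assoc C0 9 7) x :=
      sum_eq_single_of_mem x (mem_filter.mpr ⟨mem_univ x, fun _ => le_rfl⟩) fun z hz hne =>
        hvanish z (hx ▸ wt_lt_of_leq_of_ne (mem_filter.mp hz).2 hne).ne
    rw [hsingle, hx] at hsum
    rw [hx] at hk
    norm_num at hsum hk
    refine ⟨k - 7, by push_cast; linarith, by omega, by omega⟩
  · obtain ⟨k, -, hsum⟩ := exists_sum_below_hat_assoc C0 9 7 x
    rw [hx] at hsum
    norm_num at hsum
    refine ⟨2 * k - 7, ⟨k - 4, by ring⟩, ?_⟩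
    change ∑ z ∈ below x, hat (assoc C0 9 7) z = _
    push_cast
    linarith
end
end
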